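/- arXiv:2010.06383 — 4 statements merged into one kernel-verified Lean document; each statement's English description precedes it below -/
import Mathlib

section
/- Let ρ and σ be non-degenerate density matrices and let t ↦ σ_t be the exponential arc connecting σ to ρ. Then t ↦ σ_t is differentiable at t = 0 and its derivative there equals the Kubo transform [c_ρ(σ)]^K_ρ = ∫₀¹ ρ^u (log σ − log ρ + D(ρ||σ)·I) ρ^{1−u} du. -/
/-!
Write `B = log σ - log ρ`, so that `σ_t = e^{-α(t)} exp(log ρ + t B)`. Duhamel's formula
`e^A - e^C = ∫₀¹ e^{uA} (A - C) e^{(1-u)C} du` shows that `t ↦ exp(log ρ + t B)` has derivative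
`[B]^K_ρ` at `0`. By cyclicity of the trace, `Tr [B]^K_ρ = Tr ρB = -D(ρ‖σ)`, hence `α'(0) = -D(ρ‖σ)`
because `Tr ρ = 1`, and the product rule gives `σ'_0 = [B]^K_ρ + D(ρ‖σ) ρ = [c_ρ(σ)]^K_ρ`, using
`[I]^K_ρ = ρ`.
-/

open MeasureTheory
open scoped ComplexOrder

attribute [local instance] Matrix.frobeniusNormedAddCommGroup Matrix.frobeniusNormedSpace

variable {n : ℕ}

/-- The matrix exponential. -/
noncomputable def mexp (A : Matrix (Fin n) (Fin n) ℂ) : Matrix (Fin n) (Fin n) ℂ :=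
  NormedSpace.exp A

/-- The matrix logarithm, defined by (real) functional calculus; meaningful on
positive definite matrices. -/
noncomputable def mlog (A : Matrix (Fin n) (Fin n) ℂ) : Matrix (Fin n) (Fin n) ℂ :=
  cfc Real.log A

/-- Real powers of a matrix, defined by (real) functional calculus; meaningful on
positive definite matrices. -/
noncomputable def mpow (A : Matrix (Fin n) (Fin n) ℂ) (u : ℝ) : Matrix (Fin n) (Fin n) ℂ :=
  cfc (fun x : ℝ => x ^ u) A

/-- Umegaki's relative entropy `D(ρ‖σ) = Tr ρ (log ρ - log σ)` (a real number). -/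
noncomputable def relEnt (ρ σ : Matrix (Fin n) (Fin n) ℂ) : ℝ :=
  (Matrix.trace (ρ * (mlog ρ - mlog σ))).re

/-- The Kubo transform `[A]^K_ρ = ∫₀¹ ρ^u A ρ^(1-u) du` (entrywise Bochner integral). -/
noncomputable def kubo (ρ A : Matrix (Fin n) (Fin n) ℂ) : Matrix (Fin n) (Fin n) ℂ :=
  ∫ u in (0:ℝ)..1, mpow ρ u * A * mpow ρ (1 - u)

/-- The chart centered at `ρ`: `c_ρ(σ) = log σ - log ρ + D(ρ‖σ)·I`. -/
noncomputable def chart (ρ σ : Matrix (Fin n) (Fin n) ℂ) : Matrix (Fin n) (Fin n) ℂ :=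
  mlog σ - mlog ρ + relEnt ρ σ • (1 : Matrix (Fin n) (Fin n) ℂ)

/-- The normalization `α(t) = log Tr exp((1-t)·log ρ + t·log σ)` of the exponential arc. -/
noncomputable def alpha (ρ σ : Matrix (Fin n) (Fin n) ℂ) (t : ℝ) : ℝ :=
  Real.log (Matrix.trace (mexp ((1 - t) • mlog ρ + t • mlog σ))).re

/-- The exponential arc connecting `σ` to `ρ`:
`σ_t = exp((1-t)·log ρ + t·log σ - α(t)·I)`. -/
noncomputable def arc (ρ σ : Matrix (Fin n) (Fin n) ℂ) (t : ℝ) : Matrix (Fin n) (Fin n) ℂ :=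
  mexp ((1 - t) • mlog ρ + t • mlog σ - alpha ρ σ t • (1 : Matrix (Fin n) (Fin n) ℂ))

/-- The potential `Φ_ρ(A) = log Tr exp(log ρ + A)`. -/
noncomputable def potential (ρ A : Matrix (Fin n) (Fin n) ℂ) : ℝ :=
  Real.log (Matrix.trace (mexp (mlog ρ + A))).re

/-- The density matrix `τ_A = exp(log ρ + A) / Tr exp(log ρ + A)`. -/
noncomputable def tauOf (ρ A : Matrix (Fin n) (Fin n) ℂ) : Matrix (Fin n) (Fin n) ℂ :=
  (Matrix.trace (mexp (mlog ρ + A)))⁻¹ • mexp (mlog ρ + A)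

open NormedSpace

section BanachAlgebra

variable {𝔸 : Type*} [NormedRing 𝔸] [NormedAlgebra ℝ 𝔸] [CompleteSpace 𝔸]

theorem hasDerivAt_exp_smul_mul_exp_one_sub_smul (A C : 𝔸) (u : ℝ) :
    HasDerivAt (fun v : ℝ => exp (v • A) * exp ((1 - v) • C))
      (exp (u • A) * (A - C) * exp ((1 - u) • C)) u := by
  have hC : HasDerivAt (fun v : ℝ => exp ((1 - v) • C)) (-(C * exp ((1 - u) • C))) u := by
    simpa [Function.comp_def] using
      (hasDerivAt_exp_smul_const' C (1 - u)).scomp u ((hasDerivAt_id u).const_sub 1)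
  refine ((hasDerivAt_exp_smul_const A u).mul hC).congr_deriv ?_
  rw [mul_neg, ← mul_assoc, ← sub_eq_add_neg, ← sub_mul, ← mul_sub]

theorem continuous_exp_smul_mul_mul_exp_smul (A M C : 𝔸) :
    Continuous fun u : ℝ => exp (u • A) * M * exp ((1 - u) • C) := by
  let +nondep : NormedAlgebra ℚ 𝔸 := .restrictScalars ℚ ℝ 𝔸
  fun_prop

theorem exp_sub_exp_eq_integral (A C : 𝔸) :
    exp A - exp C = ∫ u in (0:ℝ)..1, exp (u • A) * (A - C) * exp ((1 - u) • C) := by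
  rw [intervalIntegral.integral_eq_sub_of_hasDerivAt
    (fun u _ => hasDerivAt_exp_smul_mul_exp_one_sub_smul A C u)
    ((continuous_exp_smul_mul_mul_exp_smul A (A - C) C).intervalIntegrable 0 1)]
  simp

theorem hasDerivAt_exp_add_smul (X B : 𝔸) :
    HasDerivAt (fun t : ℝ => exp (X + t • B))
      (∫ u in (0:ℝ)..1, exp (u • X) * B * exp ((1 - u) • X)) 0 := by
  let +nondep : NormedAlgebra ℚ 𝔸 := .restrictScalars ℚ ℝ 𝔸
  set G : ℝ → 𝔸 := fun t => ∫ u in (0:ℝ)..1, exp (u • (X + t • B)) * B * exp ((1 - u) • X)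
  have hG : Continuous G :=
    intervalIntegral.continuous_parametric_intervalIntegral_of_continuous' (by fun_prop) 0 1
  have hslope : ∀ t ≠ 0, slope (fun t : ℝ => exp (X + t • B)) 0 t = G t := by
    intro t ht
    rw [slope_def_module, zero_smul, add_zero, sub_zero, exp_sub_exp_eq_integral,
      add_sub_cancel_left, ← intervalIntegral.integral_smul]
    refine intervalIntegral.integral_congr fun u _ => ?_
    simp only [mul_smul_comm, smul_mul_assoc, inv_smul_smul₀ ht]
  have hG0 : G 0 = ∫ u in (0:ℝ)..1, exp (u • X) * B * exp ((1 - u) • X) := by simp [G]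
  rw [hasDerivAt_iff_tendsto_slope, ← hG0]
  refine ((hG.tendsto 0).mono_left nhdsWithin_le_nhds).congr' ?_
  filter_upwards [self_mem_nhdsWithin] with t ht using (hslope t ht).symm

theorem exp_smul_mul_exp_one_sub_smul (L : 𝔸) (u : ℝ) :
    exp (u • L) * exp ((1 - u) • L) = exp L := by
  let +nondep : NormedAlgebra ℚ 𝔸 := .restrictScalars ℚ ℝ 𝔸
  rw [← exp_add_of_commute ((Commute.refl L).smul_left u |>.smul_right (1 - u)), ← add_smul,
    add_sub_cancel, one_smul]

theorem exp_sub_smul_one (Y : 𝔸) (r : ℝ) : exp (Y - r • (1 : 𝔸)) = Real.exp (-r) • exp Y := by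
  let +nondep : NormedAlgebra ℚ 𝔸 := .restrictScalars ℚ ℝ 𝔸
  rw [sub_eq_add_neg, ← neg_smul, ← Algebra.algebraMap_eq_smul_one,
    exp_add_of_commute (Algebra.commutes _ Y).symm, ← algebraMap_exp_comm, Real.exp_eq_exp_ℝ,
    Algebra.algebraMap_eq_smul_one, mul_smul_one]

end BanachAlgebra

section FunctionalCalculus

-- The matrix functional calculus lives on the product topology, which the Frobenius norm does not
-- reproduce reducibly; the L² operator norm does.
open scoped Matrix.Norms.L2Operator MatrixOrder

variable {ρ : Matrix (Fin n) (Fin n) ℂ}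

theorem mexp_mlog (hρ : ρ.PosDef) : mexp (mlog ρ) = ρ :=
  CFC.exp_log ρ hρ.isStrictlyPositive

theorem mpow_eq_mexp (hρ : ρ.PosDef) (u : ℝ) : mpow ρ u = mexp (u • mlog ρ) := by
  have hlog : ContinuousOn Real.log (spectrum ℝ ρ) := by
    refine Real.continuousOn_log.mono fun x hx => ?_
    exact (hρ.isStrictlyPositive.spectrum_pos hx).ne'
  calc mpow ρ u = cfc (fun x => Real.exp (u * Real.log x)) ρ := by
        refine cfc_congr fun x hx => ?_
        rw [Real.rpow_def_of_pos (hρ.isStrictlyPositive.spectrum_pos hx), mul_comm]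
    _ = cfc Real.exp (cfc (fun x => u * Real.log x) ρ) := cfc_comp' ..
    _ = mexp (u • mlog ρ) := by
        rw [CFC.real_exp_eq_normedSpace_exp, cfc_const_mul u Real.log ρ]
        rfl

end FunctionalCalculus

noncomputable def Matrix.reTraceCLM (m : Type*) [Fintype m] : Matrix m m ℂ →L[ℝ] ℝ :=
  LinearMap.toContinuousLinearMap
    (Complex.reLm ∘ₗ (Matrix.traceLinearMap m ℂ ℂ).restrictScalars ℝ)

theorem Matrix.reTraceCLM_apply {m : Type*} [Fintype m] (A : Matrix m m ℂ) :
    Matrix.reTraceCLM m A = A.trace.re :=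
  rfl

section ExponentialArc

attribute [local instance] Matrix.frobeniusNormedRing Matrix.frobeniusNormedAlgebra

variable {ρ : Matrix (Fin n) (Fin n) ℂ}

theorem kubo_eq_integral_mexp (hρ : ρ.PosDef) (A : Matrix (Fin n) (Fin n) ℂ) :
    kubo ρ A = ∫ u in (0:ℝ)..1, mexp (u • mlog ρ) * A * mexp ((1 - u) • mlog ρ) := by
  simp only [kubo, mpow_eq_mexp hρ]

theorem mexp_smul_mlog_mul_mexp_one_sub_smul_mlog (hρ : ρ.PosDef) (u : ℝ) :
    mexp (u • mlog ρ) * mexp ((1 - u) • mlog ρ) = ρ :=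
  (exp_smul_mul_exp_one_sub_smul (mlog ρ) u).trans (mexp_mlog hρ)

theorem kubo_add_smul_one (hρ : ρ.PosDef) (A : Matrix (Fin n) (Fin n) ℂ) (r : ℝ) :
    kubo ρ (A + r • 1) = kubo ρ A + r • ρ := by
  have hsplit : ∀ u : ℝ, mexp (u • mlog ρ) * (A + r • 1) * mexp ((1 - u) • mlog ρ) =
      mexp (u • mlog ρ) * A * mexp ((1 - u) • mlog ρ) + r • ρ := fun u => by
    rw [mul_add, add_mul, mul_smul_one, smul_mul_assoc,
      mexp_smul_mlog_mul_mexp_one_sub_smul_mlog hρ]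
  rw [kubo_eq_integral_mexp hρ, kubo_eq_integral_mexp hρ,
    intervalIntegral.integral_congr fun u _ => hsplit u,
    intervalIntegral.integral_add
      ((continuous_exp_smul_mul_mul_exp_smul _ _ _).intervalIntegrable 0 1)
      intervalIntegrable_const, intervalIntegral.integral_const]
  simp

theorem re_trace_kubo (hρ : ρ.PosDef) (A : Matrix (Fin n) (Fin n) ℂ) :
    (kubo ρ A).trace.re = (ρ * A).trace.re := by
  have hcycle : ∀ u : ℝ, Matrix.reTraceCLM (Fin n)
      (mexp (u • mlog ρ) * A * mexp ((1 - u) • mlog ρ)) = (ρ * A).trace.re := fun u => by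
    have hρ' := mexp_smul_mlog_mul_mexp_one_sub_smul_mlog hρ (1 - u)
    rw [sub_sub_cancel] at hρ'
    rw [Matrix.reTraceCLM_apply, Matrix.trace_mul_cycle, hρ']
  calc (kubo ρ A).trace.re
      = Matrix.reTraceCLM (Fin n)
          (∫ u in (0:ℝ)..1, mexp (u • mlog ρ) * A * mexp ((1 - u) • mlog ρ)) := by
        rw [kubo_eq_integral_mexp hρ, Matrix.reTraceCLM_apply]
    _ = ∫ u in (0:ℝ)..1, (ρ * A).trace.re := by
        rw [← intervalIntegral.integral_congr fun u _ => hcycle u]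
        exact (ContinuousLinearMap.intervalIntegral_comp_comm _
          ((continuous_exp_smul_mul_mul_exp_smul _ _ _).intervalIntegrable 0 1)).symm
    _ = (ρ * A).trace.re := by simp

theorem hasDerivAt_mexp_mlog_add_smul (hρ : ρ.PosDef) (B : Matrix (Fin n) (Fin n) ℂ) :
    HasDerivAt (fun t : ℝ => mexp (mlog ρ + t • B)) (kubo ρ B) 0 := by
  rw [kubo_eq_integral_mexp hρ]
  exact hasDerivAt_exp_add_smul (mlog ρ) B

theorem alpha_eq (ρ σ : Matrix (Fin n) (Fin n) ℂ) (t : ℝ) :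
    alpha ρ σ t = Real.log (mexp (mlog ρ + t • (mlog σ - mlog ρ))).trace.re := by
  rw [alpha, show (1 - t) • mlog ρ + t • mlog σ = mlog ρ + t • (mlog σ - mlog ρ) by module]

theorem arc_eq (ρ σ : Matrix (Fin n) (Fin n) ℂ) (t : ℝ) :
    arc ρ σ t = Real.exp (-alpha ρ σ t) • mexp (mlog ρ + t • (mlog σ - mlog ρ)) := by
  rw [arc, show (1 - t) • mlog ρ + t • mlog σ = mlog ρ + t • (mlog σ - mlog ρ) by module]
  exact exp_sub_smul_one _ _

theorem alpha_zero (hρ : ρ.PosDef) (hρ1 : ρ.trace = 1) (σ : Matrix (Fin n) (Fin n) ℂ) :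
    alpha ρ σ 0 = 0 := by
  simp [alpha_eq, mexp_mlog hρ, hρ1]

theorem hasDerivAt_alpha (hρ : ρ.PosDef) (hρ1 : ρ.trace = 1) (σ : Matrix (Fin n) (Fin n) ℂ) :
    HasDerivAt (alpha ρ σ) (ρ * (mlog σ - mlog ρ)).trace.re 0 := by
  have htrace : HasDerivAt (fun t : ℝ => (mexp (mlog ρ + t • (mlog σ - mlog ρ))).trace.re)
      (ρ * (mlog σ - mlog ρ)).trace.re 0 :=
    ((Matrix.reTraceCLM (Fin n)).hasFDerivAt.comp_hasDerivAt 0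
      (hasDerivAt_mexp_mlog_add_smul hρ _)).congr_deriv (re_trace_kubo hρ _)
  have hlog := htrace.log (by simp [mexp_mlog hρ, hρ1])
  simpa [← alpha_eq, mexp_mlog hρ, hρ1] using hlog

theorem relEnt_eq_neg_re_trace (ρ σ : Matrix (Fin n) (Fin n) ℂ) :
    relEnt ρ σ = -(ρ * (mlog σ - mlog ρ)).trace.re := by
  rw [relEnt, ← neg_sub, mul_neg, Matrix.trace_neg, Complex.neg_re]

end ExponentialArc

theorem stmt3_general (n : ℕ) (ρ σ : Matrix (Fin n) (Fin n) ℂ)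
    (hρ : ρ.PosDef) (hρ1 : ρ.trace = 1) :
    HasDerivAt (fun t : ℝ => arc ρ σ t) (kubo ρ (chart ρ σ)) 0 := by
  have hF := hasDerivAt_mexp_mlog_add_smul hρ (mlog σ - mlog ρ)
  have hα := hasDerivAt_alpha hρ hρ1 σ
  rw [funext (arc_eq ρ σ), chart, kubo_add_smul_one hρ, relEnt_eq_neg_re_trace]
  refine (hα.neg.exp.smul hF).congr_deriv ?_
  simp [alpha_zero hρ hρ1, mexp_mlog hρ]

/-- the exponential arc connecting `σ` to `ρ` is differentiable at `t = 0`
with derivative the Kubo transform `[c_ρ(σ)]^K_ρ`. -/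
theorem stmt3 (n : ℕ) (hn : 1 ≤ n) (ρ σ : Matrix (Fin n) (Fin n) ℂ)
    (hρ : ρ.PosDef) (hρ1 : ρ.trace = 1) (hσ : σ.PosDef) (hσ1 : σ.trace = 1) :
    HasDerivAt (fun t : ℝ => arc ρ σ t) (kubo ρ (chart ρ σ)) 0 :=
  stmt3_general n ρ σ hρ hρ1
end

section
/- Let ρ be a positive definite n×n complex matrix. The Kubo transform A ↦ [A]^K_ρ is injective: if [A]^K_ρ = 0 then A = 0. Consequently A ↦ [A]^K_ρ is a linear bijection of the space of n×n complex matrices onto itself. -/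
/-!
Diagonalize `ρ = U diag(λ) U*`. Conjugating by `U`, the Kubo transform multiplies the `(i, j)` entry
of `U* A U` by `∫₀¹ λᵢ^u λⱼ^(1-u) du`, which is positive since `λᵢ, λⱼ > 0`; hence it is injective,
and an injective linear endomorphism of a finite-dimensional space is bijective.
-/

open MeasureTheory
open scoped ComplexOrder

attribute [local instance] Matrix.frobeniusNormedAddCommGroup Matrix.frobeniusNormedSpace

variable {n : ℕ}

open Matrix Unitary

lemma integral_rpow_mul_rpow_one_sub_pos {a b : ℝ} (ha : 0 < a) (hb : 0 < b) :
    0 < ∫ u in (0:ℝ)..1, a ^ u * b ^ (1 - u) :=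
  intervalIntegral.intervalIntegral_pos_of_pos
    (((Real.continuous_const_rpow ha.ne').mul ((Real.continuous_const_rpow hb.ne').comp
      (continuous_const.sub continuous_id))).intervalIntegrable _ _)
    (fun u => by positivity) zero_lt_one

lemma Matrix.continuous_diagonal_rpow {ι : Type*} [DecidableEq ι] {d : ι → ℝ}
    (hd : ∀ i, d i ≠ 0) : Continuous fun u : ℝ => diagonal fun i => ((d i ^ u : ℝ) : ℂ) :=
  continuous_id.matrix_diagonal.comp <| continuous_pi fun i =>
    Complex.continuous_ofReal.comp (Real.continuous_const_rpow (hd i))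

variable {ρ : Matrix (Fin n) (Fin n) ℂ}

lemma Matrix.IsHermitian.mpow_eq (hρ : ρ.IsHermitian) (u : ℝ) :
    mpow ρ u = conjStarAlgAut ℂ _ hρ.eigenvectorUnitary
      (diagonal fun i => ((hρ.eigenvalues i ^ u : ℝ) : ℂ)) := by
  rw [mpow, hρ.cfc_eq]; rfl

lemma Matrix.PosDef.continuous_mpow (hρ : ρ.PosDef) : Continuous (mpow ρ) := by
  simp_rw [funext hρ.1.mpow_eq]
  exact (conjStarAlgAut ℂ _ hρ.1.eigenvectorUnitary).toAlgEquiv.toLinearMap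
    |>.continuous_of_finiteDimensional.comp
      (continuous_diagonal_rpow fun i => (hρ.eigenvalues_pos i).ne')

lemma Matrix.PosDef.continuous_kubo_integrand (hρ : ρ.PosDef) (A : Matrix (Fin n) (Fin n) ℂ) :
    Continuous fun u => mpow ρ u * A * mpow ρ (1 - u) :=
  (hρ.continuous_mpow.matrix_mul continuous_const).matrix_mul
    (hρ.continuous_mpow.comp (continuous_const.sub continuous_id))

lemma Matrix.PosDef.kubo_add (hρ : ρ.PosDef) (A B : Matrix (Fin n) (Fin n) ℂ) :
    kubo ρ (A + B) = kubo ρ A + kubo ρ B := by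
  rw [kubo, kubo, kubo, ← intervalIntegral.integral_add
    ((hρ.continuous_kubo_integrand A).intervalIntegrable 0 1)
    ((hρ.continuous_kubo_integrand B).intervalIntegrable 0 1)]
  simp only [Matrix.mul_add, Matrix.add_mul]

lemma kubo_smul (ρ : Matrix (Fin n) (Fin n) ℂ) (c : ℂ) (A : Matrix (Fin n) (Fin n) ℂ) :
    kubo ρ (c • A) = c • kubo ρ A := by
  rw [kubo, kubo, ← intervalIntegral.integral_smul]
  simp only [Matrix.mul_smul, Matrix.smul_mul]

lemma Matrix.PosDef.kubo_conj_apply (hρ : ρ.PosDef) (A : Matrix (Fin n) (Fin n) ℂ) (i j : Fin n) :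
    (conjStarAlgAut ℂ _ hρ.1.eigenvectorUnitary).symm (kubo ρ A) i j =
      ((∫ u in (0:ℝ)..1, hρ.1.eigenvalues i ^ u * hρ.1.eigenvalues j ^ (1 - u) : ℝ) : ℂ) *
        (conjStarAlgAut ℂ _ hρ.1.eigenvectorUnitary).symm A i j := by
  set W := conjStarAlgAut ℂ _ hρ.1.eigenvectorUnitary
  let L := (entryLinearMap ℂ ℂ i j ∘ₗ W.symm.toAlgEquiv.toLinearMap).toContinuousLinearMap
  have hL : ∀ X, L X = W.symm X i j := fun _ => rfl
  rw [← hL, kubo]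
  -- `L` lives on the product topology of matrices, the integral on the Frobenius one; the two agree
  -- only up to unfolding, so `rw` cannot move `L` through the integral and we use `trans`.
  refine (L.intervalIntegral_comp_comm
    ((hρ.continuous_kubo_integrand A).intervalIntegrable 0 1)).symm.trans ?_
  have hpt : ∀ u, L (mpow ρ u * A * mpow ρ (1 - u)) =
      ((hρ.1.eigenvalues i ^ u * hρ.1.eigenvalues j ^ (1 - u) : ℝ) : ℂ) * W.symm A i j := by
    intro u
    rw [hL, hρ.1.mpow_eq, hρ.1.mpow_eq, map_mul, map_mul, StarAlgEquiv.symm_apply_apply,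
      StarAlgEquiv.symm_apply_apply, mul_diagonal, diagonal_mul]
    push_cast
    ring
  refine (intervalIntegral.integral_congr fun u _ => hpt u).trans ?_
  rw [intervalIntegral.integral_mul_const, intervalIntegral.integral_ofReal]

lemma Matrix.PosDef.isLinearMap_kubo (hρ : ρ.PosDef) : IsLinearMap ℂ (kubo ρ) :=
  ⟨hρ.kubo_add, kubo_smul ρ⟩

lemma Matrix.PosDef.eq_zero_of_kubo_eq_zero (hρ : ρ.PosDef) {A : Matrix (Fin n) (Fin n) ℂ}
    (hA : kubo ρ A = 0) : A = 0 := by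
  set W := conjStarAlgAut ℂ _ hρ.1.eigenvectorUnitary
  suffices W.symm A = 0 from (map_eq_zero_iff _ W.symm.injective).1 this
  ext i j
  have hij := hρ.kubo_conj_apply A i j
  rw [hA, map_zero, zero_apply, eq_comm, mul_eq_zero] at hij
  exact hij.resolve_left (Complex.ofReal_ne_zero.2
    (integral_rpow_mul_rpow_one_sub_pos (hρ.eigenvalues_pos i) (hρ.eigenvalues_pos j)).ne')

lemma Matrix.PosDef.bijective_kubo (hρ : ρ.PosDef) : Function.Bijective (kubo ρ) := by
  let K := IsLinearMap.mk' _ hρ.isLinearMap_kubo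
  have hK : Function.Injective K :=
    (injective_iff_map_eq_zero K).2 fun _ => hρ.eq_zero_of_kubo_eq_zero
  exact ⟨hK, LinearMap.injective_iff_surjective.1 hK⟩

theorem stmt5_general (n : ℕ) (ρ : Matrix (Fin n) (Fin n) ℂ) (hρ : ρ.PosDef) :
    (∀ A : Matrix (Fin n) (Fin n) ℂ, kubo ρ A = 0 → A = 0) ∧
    IsLinearMap ℂ (fun A : Matrix (Fin n) (Fin n) ℂ => kubo ρ A) ∧
    Function.Bijective (fun A : Matrix (Fin n) (Fin n) ℂ => kubo ρ A) :=
  ⟨fun _ => hρ.eq_zero_of_kubo_eq_zero, hρ.isLinearMap_kubo, hρ.bijective_kubo⟩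

/-- the Kubo transform is injective, hence a linear bijection of the space
of `n×n` complex matrices onto itself. -/
theorem stmt5 (n : ℕ) (hn : 1 ≤ n) (ρ : Matrix (Fin n) (Fin n) ℂ) (hρ : ρ.PosDef) :
    (∀ A : Matrix (Fin n) (Fin n) ℂ, kubo ρ A = 0 → A = 0) ∧
    IsLinearMap ℂ (fun A : Matrix (Fin n) (Fin n) ℂ => kubo ρ A) ∧
    Function.Bijective (fun A : Matrix (Fin n) (Fin n) ℂ => kubo ρ A) :=
  stmt5_general n ρ hρ
end

section
/- Let ρ be a non-degenerate density matrix and A a Hermitian n×n matrix with Tr ρA = 0, and define Φ_ρ(A) = log Tr exp(log ρ + A) and τ_A = exp(log ρ + A) / Tr exp(log ρ + A). Then c_ρ(τ_A) = A and Φ_ρ(A) = D(ρ||τ_A). -/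
/-!
Since `τ_A` is a positive multiple of the exponential of the Hermitian matrix `log ρ + A`,
functional calculus gives `log τ_A = log ρ + A - Φ_ρ(A)·I`. Pairing with `ρ` and using
`Tr ρ = 1`, `Tr ρA = 0` yields `D(ρ‖τ_A) = Φ_ρ(A)`, and then `c_ρ(τ_A) = A` is immediate.
-/

open MeasureTheory
open scoped ComplexOrder

attribute [local instance] Matrix.frobeniusNormedAddCommGroup Matrix.frobeniusNormedSpace

variable {n : ℕ}

namespace Matrix.IsHermitian

variable {ι 𝕜 : Type*} [Fintype ι] [DecidableEq ι] [RCLike 𝕜] {B : Matrix ι ι 𝕜}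

lemma trace_cfc (hB : B.IsHermitian) (f : ℝ → ℝ) :
    (cfc f B).trace = ∑ i, (f (hB.eigenvalues i) : 𝕜) := by
  rw [hB.cfc_eq, Matrix.IsHermitian.cfc, Unitary.conjStarAlgAut_apply, Matrix.trace_mul_cycle,
    Unitary.star_mul_self_of_mem (SetLike.coe_mem _), one_mul, Matrix.trace_diagonal]
  rfl

end Matrix.IsHermitian

section

variable {B : Matrix (Fin n) (Fin n) ℂ}

-- `NormedSpace.exp` depends only on the topology, so any normed ring structure may be used.
lemma mexp_eq_cfc_exp (hB : B.IsHermitian) : mexp B = cfc Real.exp B :=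
  (@CFC.real_exp_eq_normedSpace_exp _ Matrix.linftyOpNormedRing _ Matrix.linftyOpNormedAlgebra
    Matrix.IsHermitian.instContinuousFunctionalCalculus B hB).symm

lemma trace_mexp (hB : B.IsHermitian) :
    (mexp B).trace = ((∑ i, Real.exp (hB.eigenvalues i) : ℝ) : ℂ) := by
  rw [mexp_eq_cfc_exp hB, hB.trace_cfc, Complex.ofReal_sum]
  rfl

lemma mlog_smul_mexp (hB : B.IsHermitian) {c : ℝ} (hc : c ≠ 0) :
    mlog (c • mexp B) = B + Real.log c • 1 := by
  rw [mexp_eq_cfc_exp hB, ← cfc_smul c Real.exp B, mlog, ← cfc_comp' Real.log _ B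
    ((Matrix.finite_real_spectrum.image _).continuousOn _) (by fun_prop)]
  have : (fun x => Real.log (c • Real.exp x)) = fun x => x + Real.log c := by
    funext x
    rw [smul_eq_mul, Real.log_mul hc (Real.exp_pos x).ne', Real.log_exp, add_comm]
  rw [this, cfc_add_const _ _ B, cfc_id' ℝ B, Algebra.algebraMap_eq_smul_one]

end

lemma mlog_tauOf [NeZero n] (ρ : Matrix (Fin n) (Fin n) ℂ) {A : Matrix (Fin n) (Fin n) ℂ}
    (hA : A.IsHermitian) : mlog (tauOf ρ A) = mlog ρ + A - potential ρ A • 1 := by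
  have hB : (mlog ρ + A).IsHermitian := (cfc_predicate Real.log ρ : (mlog ρ).IsHermitian).add hA
  have hpos : 0 < ∑ i, Real.exp (hB.eigenvalues i) :=
    Finset.sum_pos (fun i _ => Real.exp_pos _) Finset.univ_nonempty
  rw [tauOf, potential, trace_mexp hB, ← Complex.ofReal_inv, Complex.coe_smul,
    mlog_smul_mexp hB (inv_ne_zero hpos.ne'), Complex.ofReal_re, Real.log_inv, neg_smul,
    sub_eq_add_neg]

lemma relEnt_tauOf [NeZero n] {ρ A : Matrix (Fin n) (Fin n) ℂ} (hρ1 : ρ.trace = 1)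
    (hA : A.IsHermitian) (hAtr : (ρ * A).trace = 0) :
    relEnt ρ (tauOf ρ A) = potential ρ A := by
  have : mlog ρ - mlog (tauOf ρ A) = potential ρ A • 1 - A := by
    rw [mlog_tauOf ρ hA]; abel
  rw [relEnt, this, Matrix.mul_sub, Matrix.trace_sub, hAtr, sub_zero, Matrix.mul_smul,
    Matrix.mul_one, Matrix.trace_smul, hρ1]
  simp

theorem stmt14_general (n : ℕ) (hn : 1 ≤ n) (ρ : Matrix (Fin n) (Fin n) ℂ)
    (hρ1 : ρ.trace = 1)
    (A : Matrix (Fin n) (Fin n) ℂ) (hA : A.IsHermitian) (hAtr : (ρ * A).trace = 0) :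
    chart ρ (tauOf ρ A) = A ∧ potential ρ A = relEnt ρ (tauOf ρ A) := by
  have : NeZero n := ⟨by omega⟩
  refine ⟨?_, (relEnt_tauOf hρ1 hA hAtr).symm⟩
  rw [chart, relEnt_tauOf hρ1 hA hAtr, mlog_tauOf ρ hA]
  abel

/-- for Hermitian `A` with `Tr ρA = 0` one has `c_ρ(τ_A) = A` and
`Φ_ρ(A) = D(ρ‖τ_A)`. -/
theorem stmt14 (n : ℕ) (hn : 1 ≤ n) (ρ : Matrix (Fin n) (Fin n) ℂ)
    (hρ : ρ.PosDef) (hρ1 : ρ.trace = 1)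
    (A : Matrix (Fin n) (Fin n) ℂ) (hA : A.IsHermitian) (hAtr : (ρ * A).trace = 0) :
    chart ρ (tauOf ρ A) = A ∧ potential ρ A = relEnt ρ (tauOf ρ A) :=
  stmt14_general n hn ρ hρ1 A hA hAtr
end

section
/- Let ρ be a non-degenerate density matrix and A, B Hermitian n×n matrices, and define Φ_ρ(A) = log Tr exp(log ρ + A) and τ_A = exp(log ρ + A) / Tr exp(log ρ + A). Then the real-valued function t ↦ Φ_ρ(A + tB) is differentiable at t = 0 with derivative Tr( τ_A B ); i.e. the derivative of the potential Φ_ρ at A in the direction B equals Tr τ_A B. -/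
open MeasureTheory
open scoped ComplexOrder

attribute [local instance] Matrix.frobeniusNormedAddCommGroup Matrix.frobeniusNormedSpace

variable {n : ℕ}

/-! The potential is the logarithm of `t ↦ Tr exp(H + tB)` with `H = log ρ + A` Hermitian, and
`Tr exp H = Tr (exp (H/2))ᴴ exp (H/2) > 0`, so by the chain rule it suffices to show
`d/dt Tr exp(H + tB) |₀ = Tr(exp H · B)`. This holds for every continuous tracial functional `τ` on
a Banach algebra: differentiating the exponential series termwise, cyclicity of `τ` collapses the
`k` noncommuting terms of `d/dt (H + tB)^k` into `k · τ(H^(k-1) B)`, and the resulting series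
`∑ τ(H^(k-1) B) / (k-1)!` is `τ(exp H · B)`. -/

attribute [local instance] Matrix.frobeniusNormedRing Matrix.frobeniusNormedAlgebra

open NormedSpace (exp)
open scoped Nat Matrix

theorem norm_pow_mul_le {R : Type*} [NormedRing R] (a c : R) (k : ℕ) :
    ‖a ^ k * c‖ ≤ ‖a‖ ^ k * ‖c‖ := by
  induction k with
  | zero => simp
  | succ k ih =>
    calc ‖a ^ (k + 1) * c‖ = ‖a * (a ^ k * c)‖ := by rw [pow_succ', mul_assoc]
    _ ≤ ‖a‖ * (‖a‖ ^ k * ‖c‖) := (norm_mul_le _ _).trans (by gcongr)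
    _ = ‖a‖ ^ (k + 1) * ‖c‖ := by ring

theorem inv_factorial_succ_mul_succ {K : Type*} [Field K] [CharZero K] (k : ℕ) :
    ((k + 1)! : K)⁻¹ * (k + 1 : ℕ) = (k ! : K)⁻¹ := by
  rw [Nat.factorial_succ, Nat.cast_mul, mul_inv, mul_right_comm,
    inv_mul_cancel₀ (Nat.cast_ne_zero.mpr k.succ_ne_zero), one_mul]

section TracialFunctional

variable {𝕜 𝔸 F : Type*} [RCLike 𝕜] [NormedRing 𝔸] [NormedAlgebra 𝕜 𝔸]
  [NormedAddCommGroup F] [NormedSpace 𝕜 F]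

theorem hasDerivAt_map_pow_add_smul (τ : 𝔸 →L[𝕜] F) (hτ : ∀ x y, τ (x * y) = τ (y * x))
    (a b : 𝔸) (k : ℕ) (t : 𝕜) :
    HasDerivAt (fun s : 𝕜 => τ ((a + s • b) ^ k))
      ((k : 𝕜) • τ ((a + t • b) ^ (k - 1) * b)) t := by
  have hline : HasDerivAt (fun s : 𝕜 => a + s • b) b t := by
    simpa using ((hasDerivAt_id t).smul_const b).const_add a
  refine (τ.hasFDerivAt.comp_hasDerivAt t (hline.fun_pow' k)).congr_deriv ?_
  set x := a + t • b
  have hcyc : ∀ i ∈ Finset.range k,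
      τ (x ^ (k.pred - i) * b * x ^ i) = τ (x ^ (k - 1) * b) := by
    intro i hi
    rw [hτ, ← mul_assoc, ← pow_add, Nat.pred_eq_sub_one,
      Nat.add_sub_of_le (Nat.le_sub_one_of_lt (Finset.mem_range.mp hi))]
  simp only [map_sum, Finset.sum_congr rfl hcyc, Finset.sum_const, Finset.card_range,
    Nat.cast_smul_eq_nsmul]

theorem hasDerivAt_map_exp_add_smul [CompleteSpace 𝔸] [CompleteSpace F] (τ : 𝔸 →L[𝕜] F)
    (hτ : ∀ x y, τ (x * y) = τ (y * x)) (a b : 𝔸) :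
    HasDerivAt (fun t : 𝕜 => τ (exp (a + t • b))) (τ (exp a * b)) 0 := by
  set R := ‖a‖ + ‖b‖
  set g : ℕ → 𝕜 → F := fun k t => (k ! : 𝕜)⁻¹ • τ ((a + t • b) ^ k)
  set g' : ℕ → 𝕜 → F := fun k t => (k ! : 𝕜)⁻¹ • ((k : 𝕜) • τ ((a + t • b) ^ (k - 1) * b))
  set u : ℕ → ℝ := fun k => (k ! : ℝ)⁻¹ * k * (‖τ‖ * (R ^ (k - 1) * ‖b‖))
  have hu : Summable u := by
    refine (summable_nat_add_iff 1).mp ?_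
    have hshift : (fun k => u (k + 1)) = fun k => ‖τ‖ * ‖b‖ * (R ^ k / k !) := by
      funext k
      simp only [u, inv_factorial_succ_mul_succ, Nat.add_sub_cancel]
      ring
    rw [hshift]
    exact (Real.summable_pow_div_factorial R).mul_left _
  have hbound : ∀ k t, t ∈ Metric.ball (0 : 𝕜) 1 → ‖g' k t‖ ≤ u k := by
    intro k t ht
    have hx : ‖a + t • b‖ ≤ R := (norm_add_le _ _).trans <| by
      rw [norm_smul]
      exact add_le_add le_rfl
        (mul_le_of_le_one_left (norm_nonneg b) (mem_ball_zero_iff.mp ht).le)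
    calc ‖g' k t‖ = (k ! : ℝ)⁻¹ * k * ‖τ ((a + t • b) ^ (k - 1) * b)‖ := by
          simp only [g', norm_smul, norm_inv, RCLike.norm_natCast, mul_assoc]
      _ ≤ (k ! : ℝ)⁻¹ * k * (‖τ‖ * (R ^ (k - 1) * ‖b‖)) := by
          gcongr
          exact (τ.le_opNorm _).trans (by gcongr; exact (norm_pow_mul_le _ _ _).trans (by gcongr))
  have hexp : (fun t : 𝕜 => τ (exp (a + t • b))) = fun t => ∑' k, g k t := by
    funext t
    simpa only [g, map_smul] using
      ((NormedSpace.exp_series_hasSum_exp' (𝕂 := 𝕜) _).mapL τ).tsum_eq.symm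
  have hsum0 : Summable fun k => g k 0 := by
    simpa [g] using (NormedSpace.expSeries_summable' (𝕂 := 𝕜) a).mapL τ
  have hderiv := hasDerivAt_tsum_of_isPreconnected hu Metric.isOpen_ball
    (convex_ball (0 : 𝕜) 1).isPreconnected
    (fun k t _ => (hasDerivAt_map_pow_add_smul τ hτ a b k t).const_smul _) hbound
    (Metric.mem_ball_self one_pos) hsum0 (Metric.mem_ball_self one_pos)
  rw [hexp]
  refine hderiv.congr_deriv ?_
  have hsum' : Summable fun k => g' k 0 :=
    .of_norm_bounded hu fun k => hbound k 0 (Metric.mem_ball_self one_pos)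
  rw [hsum'.tsum_eq_zero_add,
    (((NormedSpace.exp_series_hasSum_exp' (𝕂 := 𝕜) a).mul_right b).mapL τ).tsum_eq.symm]
  simp only [g', zero_smul, add_zero, smul_smul, inv_factorial_succ_mul_succ, Nat.add_sub_cancel,
    smul_mul_assoc, map_smul, Nat.cast_zero, mul_zero, zero_add]

end TracialFunctional

theorem Matrix.IsHermitian.posDef_exp {m : Type*} [Fintype m] [DecidableEq m]
    {H : Matrix m m ℂ} (hH : H.IsHermitian) : (NormedSpace.exp H).PosDef := by
  set N := NormedSpace.exp ((2⁻¹ : ℝ) • H)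
  have hN : Nᴴ = N := by
    rw [← Matrix.exp_conjTranspose, Matrix.conjTranspose_smul, hH.eq, star_trivial]
  have hsquare : NormedSpace.exp H = Nᴴ * N := by
    rw [hN, ← Matrix.exp_add_of_commute _ _ (Commute.refl _), ← add_smul]
    norm_num
  rw [hsquare]
  exact .conjTranspose_mul_self N (Matrix.mulVec_injective_iff_isUnit.mpr (Matrix.isUnit_exp _))

theorem Matrix.hasDerivAt_re_trace_exp_add_smul {m : Type*} [Fintype m] [DecidableEq m]
    (H B : Matrix m m ℂ) :
    HasDerivAt (fun t : ℝ => (NormedSpace.exp (H + t • B)).trace.re)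
      (NormedSpace.exp H * B).trace.re 0 :=
  hasDerivAt_map_exp_add_smul
    (Complex.reCLM.comp (Matrix.traceLinearMap m ℝ ℂ).toContinuousLinearMap)
    (fun x y => congrArg Complex.re (Matrix.trace_mul_comm x y)) H B

theorem stmt17_general (n : ℕ) (hn : 1 ≤ n) (ρ : Matrix (Fin n) (Fin n) ℂ)
    (A B : Matrix (Fin n) (Fin n) ℂ) (hA : A.IsHermitian) :
    HasDerivAt (fun t : ℝ => potential ρ (A + t • B))
      ((Matrix.trace (tauOf ρ A * B)).re) 0 := by
  have : Nonempty (Fin n) := ⟨⟨0, hn⟩⟩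
  have hH : (mlog ρ + A).IsHermitian := (cfc_predicate Real.log ρ).add hA
  obtain ⟨r, hr, htr⟩ : ∃ r : ℝ, 0 < r ∧ (r : ℂ) = (exp (mlog ρ + A)).trace :=
    RCLike.pos_iff_exists_ofReal.mp hH.posDef_exp.trace_pos
  have hlog := (Matrix.hasDerivAt_re_trace_exp_add_smul (mlog ρ + A) B).log
    (by rw [zero_smul, add_zero, ← htr, Complex.ofReal_re]; exact hr.ne')
  convert hlog using 1
  · funext t
    rw [potential, ← add_assoc]
    rfl
  · rw [zero_smul, add_zero, tauOf, mexp, smul_mul_assoc, Matrix.trace_smul, ← htr, smul_eq_mul,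
      ← Complex.ofReal_inv, Complex.re_ofReal_mul, Complex.ofReal_re, div_eq_inv_mul]

/-- `t ↦ Φ_ρ(A + tB)` is differentiable at `t = 0` with derivative
`Tr(τ_A B)`. -/
theorem stmt17 (n : ℕ) (hn : 1 ≤ n) (ρ : Matrix (Fin n) (Fin n) ℂ)
    (hρ : ρ.PosDef) (hρ1 : ρ.trace = 1)
    (A B : Matrix (Fin n) (Fin n) ℂ) (hA : A.IsHermitian) (hB : B.IsHermitian) :
    HasDerivAt (fun t : ℝ => potential ρ (A + t • B))
      ((Matrix.trace (tauOf ρ A * B)).re) 0 :=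
  stmt17_general n hn ρ A B hA
end
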